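/- arXiv:2402.17736 — 16 statements merged into one kernel-verified Lean document; each statement's English description precedes it below -/
import Mathlib

section
/- Let V be a nonempty finite type, d : V → V → ℝ a distance function, f : V → ℝ, and r, g ∈ V with d(g,g) = 0. Let T ∈ ℕ, let v_0, v_1, …, v_T ∈ V be pairwise distinct with v_0 = r and v_T = g, and let w_1, …, w_T ∈ V and step costs c_1, …, c_T ∈ ℝ satisfy, for every i ∈ {1,…,T}: (a) d(v_{i−1}, g) = d(v_{i−1}, w_i) + d(w_i, g), and (b) f(v_i) + c_i ≤ f(w_i) + d(v_{i−1}, w_i). Then Σ_{i=1}^T c_i ≤ d(r,g) + Σ_{u ∈ V} max(0, d(u,g) − f(u)) + |V| · max_{u ∈ V} max(0, f(u) − d(u,g)). -/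
lemma tele_sum {T : ℕ} (φ : Fin (T + 1) → ℝ) :
    ∑ i : Fin T, (φ i.castSucc - φ i.succ) = φ 0 - φ (Fin.last T) := by
  induction T with
  | zero => simp [Fin.last]
  | succ T ih =>
    rw [Fin.sum_univ_castSucc]
    have h := ih (φ ∘ Fin.castSucc)
    simp only [Function.comp] at h
    have h2 : ∀ i : Fin T, φ (i.castSucc).castSucc - φ (i.castSucc).succ
        = φ (Fin.castSucc i.castSucc) - φ (Fin.castSucc i.succ) := by
      intro i; rw [Fin.succ_castSucc]
    rw [Finset.sum_congr rfl (fun i _ => h2 i), h]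
    simp [Fin.succ_last]

/-- Trajectory form of Theorem 1: greedy graph search with predictions satisfies
`ALG ≤ OPT + E₁⁻ + n · E∞⁺`. -/
theorem greedy_search_absolute_error
    {V : Type*} [Fintype V] [Nonempty V]
    (d : V → V → ℝ) (f : V → ℝ) (r g : V) (hgg : d g g = 0)
    (T : ℕ) (v : Fin (T + 1) → V) (hv : Function.Injective v)
    (hv0 : v 0 = r) (hvT : v (Fin.last T) = g)
    (w : Fin T → V) (c : Fin T → ℝ)
    (ha : ∀ i : Fin T, d (v i.castSucc) g = d (v i.castSucc) (w i) + d (w i) g)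
    (hb : ∀ i : Fin T, f (v i.succ) + c i ≤ f (w i) + d (v i.castSucc) (w i)) :
    ∑ i, c i ≤
      d r g + (∑ u, max 0 (d u g - f u)) +
        (Fintype.card V : ℝ) *
          Finset.univ.sup' Finset.univ_nonempty (fun u => max 0 (f u - d u g)) := by
  set M := Finset.univ.sup' Finset.univ_nonempty (fun u => max 0 (f u - d u g)) with hMdef
  have hM0 : 0 ≤ M :=
    le_trans (le_max_left 0 (f (Classical.arbitrary V) - d (Classical.arbitrary V) g))
      (Finset.le_sup' (fun u => max 0 (f u - d u g)) (Finset.mem_univ (Classical.arbitrary V)))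
  have hstep : ∀ i : Fin T, c i ≤
      max 0 (f (w i) - d (w i) g) + (d (v i.castSucc) g - d (v i.succ) g)
        + max 0 (d (v i.succ) g - f (v i.succ)) := by
    intro i
    have h1 := hb i
    have h2 := ha i
    have h3 : c i ≤ (f (w i) - d (w i) g) + (d (v i.castSucc) g - d (v i.succ) g)
        + (d (v i.succ) g - f (v i.succ)) := by linarith
    refine h3.trans ?_
    gcongr
    · exact le_max_right _ _
    · exact le_max_right _ _
  have hinj : Function.Injective (fun i : Fin T => v i.succ) :=
    fun a b h => Fin.succ_injective T (hv h)
  have hA : ∑ i : Fin T, max 0 (f (w i) - d (w i) g) ≤ (T : ℝ) * M := by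
    calc ∑ i : Fin T, max 0 (f (w i) - d (w i) g)
        ≤ ∑ _i : Fin T, M :=
          Finset.sum_le_sum (fun i _ => Finset.le_sup' (fun u => max 0 (f u - d u g)) (Finset.mem_univ (w i)))
      _ = (T : ℝ) * M := by simp [mul_comm]
  classical
  have hB : ∑ i : Fin T, max 0 (d (v i.succ) g - f (v i.succ)) ≤ ∑ u, max 0 (d u g - f u) := by
    calc ∑ i : Fin T, max 0 (d (v i.succ) g - f (v i.succ))
        = ∑ u ∈ Finset.univ.image (fun i : Fin T => v i.succ), max 0 (d u g - f u) :=
          by rw [Finset.sum_image (fun a _ b _ h => hinj h)]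
      _ ≤ ∑ u, max 0 (d u g - f u) :=
          Finset.sum_le_sum_of_subset_of_nonneg (Finset.subset_univ _)
            (fun _ _ _ => le_max_left _ _)
  have hcard : (T : ℝ) ≤ (Fintype.card V : ℝ) := by
    have := Fintype.card_le_of_injective v hv
    simp only [Fintype.card_fin] at this
    exact_mod_cast le_trans (Nat.le_succ T) this
  have htele : ∑ i : Fin T, (d (v i.castSucc) g - d (v i.succ) g) = d r g := by
    rw [tele_sum (fun j => d (v j) g)]
    simp [hv0, hvT, hgg]
  calc ∑ i, c i
      ≤ ∑ i : Fin T, (max 0 (f (w i) - d (w i) g) + (d (v i.castSucc) g - d (v i.succ) g)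
          + max 0 (d (v i.succ) g - f (v i.succ))) :=
        Finset.sum_le_sum (fun i _ => hstep i)
    _ = ∑ i : Fin T, max 0 (f (w i) - d (w i) g)
          + ∑ i : Fin T, (d (v i.castSucc) g - d (v i.succ) g)
          + ∑ i : Fin T, max 0 (d (v i.succ) g - f (v i.succ)) := by
        rw [Finset.sum_add_distrib, Finset.sum_add_distrib]
    _ ≤ (T : ℝ) * M + d r g + ∑ u, max 0 (d u g - f u) := by
        rw [htele]; gcongr
    _ ≤ d r g + (∑ u, max 0 (d u g - f u)) + (Fintype.card V : ℝ) * M := by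
        have : (T : ℝ) * M ≤ (Fintype.card V : ℝ) * M :=
          mul_le_mul_of_nonneg_right hcard hM0
        linarith
end

section
/- Let V be a nonempty finite type, d : V → V → ℝ a distance function, f : V → ℝ, and r, g ∈ V with d(g,g) = 0, and suppose f is admissible: f(u) ≤ d(u,g) for all u ∈ V. Let T ∈ ℕ, let v_0, v_1, …, v_T ∈ V be pairwise distinct with v_0 = r and v_T = g, and let w_1, …, w_T ∈ V and step costs c_1, …, c_T ∈ ℝ satisfy, for every i ∈ {1,…,T}: (a) d(v_{i−1}, g) = d(v_{i−1}, w_i) + d(w_i, g), and (b) f(v_i) + c_i ≤ f(w_i) + d(v_{i−1}, w_i). Then Σ_{i=1}^T c_i ≤ d(r,g) + Σ_{u ∈ V} (d(u,g) − f(u)). -/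
/-!
Admissibility and (a) give `f(w_i) + d(v_{i-1}, w_i) ≤ d(v_{i-1}, g)`, so by (b) each step costs
at most `d(v_{i-1}, g) - f(v_i)`. Summing, the distances `d(v_{i-1}, g)` telescope against
`d(v_i, g)` up to `d(r, g) - d(g, g) = d(r, g)`, leaving `d(r, g)` plus the errors
`d(v_i, g) - f(v_i)` at the distinct vertices `v_1, …, v_T`; these errors are nonnegative, so
their sum is at most the total error over `V`.
-/

open Finset

theorem Fin.sum_castSucc_add_last_eq_zero_add_sum_succ {M : Type*} [AddCommMonoid M] {n : ℕ}
    (h : Fin (n + 1) → M) :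
    ∑ i : Fin n, h i.castSucc + h (Fin.last n) = h 0 + ∑ i : Fin n, h i.succ := by
  rw [← Fin.sum_univ_castSucc, Fin.sum_univ_succ]

theorem Fintype.sum_comp_le_sum_of_injective {ι V M : Type*} [Fintype ι] [Fintype V]
    [AddCommMonoid M] [Preorder M] [AddLeftMono M] {e : ι → V} (he : Function.Injective e)
    {φ : V → M} (hφ : ∀ u, 0 ≤ φ u) :
    ∑ i, φ (e i) ≤ ∑ u, φ u := by
  simpa using sum_le_univ_sum_of_nonneg (s := univ.map ⟨e, he⟩) hφ

theorem greedy_search_admissible_error_general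
    {V : Type*} [Fintype V]
    (d : V → V → ℝ) (f : V → ℝ) (r g : V) (hgg : d g g = 0)
    (hadm : ∀ u : V, f u ≤ d u g)
    (T : ℕ) (v : Fin (T + 1) → V) (hv : Function.Injective v)
    (hv0 : v 0 = r) (hvT : v (Fin.last T) = g)
    (w : Fin T → V) (c : Fin T → ℝ)
    (ha : ∀ i : Fin T, d (v i.castSucc) g = d (v i.castSucc) (w i) + d (w i) g)
    (hb : ∀ i : Fin T, f (v i.succ) + c i ≤ f (w i) + d (v i.castSucc) (w i)) :
    ∑ i, c i ≤ d r g + ∑ u, (d u g - f u) := by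
  have hstep : ∀ i, c i ≤ d (v i.castSucc) g - f (v i.succ) := fun i => by
    linarith [ha i, hb i, hadm (w i)]
  have htelescope := Fin.sum_castSucc_add_last_eq_zero_add_sum_succ (fun j => d (v j) g)
  simp only [hv0, hvT, hgg, add_zero] at htelescope
  calc ∑ i, c i ≤ ∑ i, (d (v i.castSucc) g - f (v i.succ)) := sum_le_sum fun i _ => hstep i
    _ = d r g + ∑ i : Fin T, (d (v i.succ) g - f (v i.succ)) := by
      simp only [sum_sub_distrib, htelescope, add_sub_assoc]
    _ ≤ d r g + ∑ u, (d u g - f u) := by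
      gcongr
      exact Fintype.sum_comp_le_sum_of_injective (φ := fun u => d u g - f u)
        (hv.comp (Fin.succ_injective T)) fun u => sub_nonneg.2 (hadm u)

/-- Trajectory form of the admissible-predictions corollary: greedy graph search with
admissible predictions satisfies `ALG ≤ OPT + E₁`. -/
theorem greedy_search_admissible_error
    {V : Type*} [Fintype V] [Nonempty V]
    (d : V → V → ℝ) (f : V → ℝ) (r g : V) (hgg : d g g = 0)
    (hadm : ∀ u : V, f u ≤ d u g)
    (T : ℕ) (v : Fin (T + 1) → V) (hv : Function.Injective v)
    (hv0 : v 0 = r) (hvT : v (Fin.last T) = g)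
    (w : Fin T → V) (c : Fin T → ℝ)
    (ha : ∀ i : Fin T, d (v i.castSucc) g = d (v i.castSucc) (w i) + d (w i) g)
    (hb : ∀ i : Fin T, f (v i.succ) + c i ≤ f (w i) + d (v i.castSucc) (w i)) :
    ∑ i, c i ≤ d r g + ∑ u, (d u g - f u) :=
  greedy_search_admissible_error_general d f r g hgg hadm T v hv hv0 hvT w c ha hb
end

section
/- Let (X,d) be a metric space, ε ∈ (0,1), r, g ∈ X, and f : X → ℝ multiplicatively ε-accurate with respect to g, i.e. (1−ε)·d(v,g) ≤ f(v) ≤ (1+ε)·d(v,g) for all v ∈ X. Define S := {v ∈ X : d(v,r) ≤ f(r)/(1−ε)}. Then: (i) every v ∉ S satisfies d(v,r) > d(r,g); (ii) every v ∈ S satisfies d(v,r) ≤ ((1+ε)/(1−ε))·d(r,g); (iii) every v ∈ S satisfies d(v,g) ≤ (2/(1−ε))·d(r,g); (iv) every u ∈ X with d(r,u) + d(u,g) = d(r,g) belongs to S. -/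
/-- Basic properties of the truncated search region
`S = {v : dist v r ≤ f r / (1 - ε)}` under multiplicatively ε-accurate predictions. -/
theorem truncated_region_properties
    {X : Type*} [MetricSpace X] (ε : ℝ) (hε0 : 0 < ε) (hε1 : ε < 1)
    (r g : X) (f : X → ℝ)
    (hf : ∀ v : X, (1 - ε) * dist v g ≤ f v ∧ f v ≤ (1 + ε) * dist v g) :
    (∀ v : X, ¬ (dist v r ≤ f r / (1 - ε)) → dist v r > dist r g) ∧
    (∀ v : X, dist v r ≤ f r / (1 - ε) → dist v r ≤ ((1 + ε) / (1 - ε)) * dist r g) ∧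
    (∀ v : X, dist v r ≤ f r / (1 - ε) → dist v g ≤ (2 / (1 - ε)) * dist r g) ∧
    (∀ u : X, dist r u + dist u g = dist r g → dist u r ≤ f r / (1 - ε)) := by
  have h1 : (0:ℝ) < 1 - ε := by linarith
  have hlow : dist r g ≤ f r / (1 - ε) := by
    rw [le_div_iff₀ h1]; linarith [(hf r).1]
  have hup : f r / (1 - ε) ≤ ((1 + ε) / (1 - ε)) * dist r g := by
    rw [div_le_iff₀ h1]
    have h2 : (1 + ε) / (1 - ε) * dist r g * (1 - ε) = (1 + ε) * dist r g := by
      field_simp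
    rw [h2]; exact (hf r).2
  refine ⟨fun v hv => lt_of_le_of_lt hlow (not_le.mp hv),
    fun v hv => hv.trans hup, fun v hv => ?_, fun u hu => ?_⟩
  · have := dist_triangle v r g
    have h2 : dist v r ≤ ((1 + ε) / (1 - ε)) * dist r g := hv.trans hup
    have : dist v g ≤ ((1 + ε) / (1 - ε)) * dist r g + dist r g := by linarith
    calc dist v g ≤ ((1 + ε) / (1 - ε)) * dist r g + dist r g := this
      _ = (2 / (1 - ε)) * dist r g := by field_simp; ring
  · have : dist u r ≤ dist r g := by
      rw [dist_comm u r]; nlinarith [dist_nonneg (x := u) (y := g)]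
    exact this.trans hlow
end

section
/- Let (X,d) be a metric space, ε ∈ (0,1), g ∈ X, and f : X → ℝ multiplicatively ε-accurate with respect to g, i.e. (1−ε)·d(v,g) ≤ f(v) ≤ (1+ε)·d(v,g) for all v ∈ X. Let u, v, w ∈ X and c ∈ ℝ satisfy: (a) d(u,g) = d(u,w) + d(w,g); (b) c ≥ d(u,v); and (c) f(v) + c ≤ f(w) + d(u,w). Then (1−ε)·c ≤ (d(u,g) − d(v,g)) + 2ε·d(v,g). -/
/-- Per-iteration bound for exploration under relative error (general case):
`(1 - ε) · c ≤ Δ + 2ε · d(v, g)`. -/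
theorem relative_error_step_general
    {X : Type*} [MetricSpace X] (ε : ℝ) (hε0 : 0 < ε) (hε1 : ε < 1)
    (g : X) (f : X → ℝ)
    (hf : ∀ v : X, (1 - ε) * dist v g ≤ f v ∧ f v ≤ (1 + ε) * dist v g)
    (u v w : X) (c : ℝ)
    (ha : dist u g = dist u w + dist w g)
    (hb : dist u v ≤ c)
    (hc : f v + c ≤ f w + dist u w) :
    (1 - ε) * c ≤ (dist u g - dist v g) + 2 * ε * dist v g := by
  have h1 := (hf v).1
  have h2 := (hf w).2
  have htri : dist u g ≤ dist u v + dist v g := dist_triangle u v g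
  nlinarith [dist_nonneg (x := u) (y := w), dist_nonneg (x := w) (y := g),
    dist_nonneg (x := v) (y := g)]
end

section
/- Let (X,d) be a metric space, ε ∈ (0,1), g ∈ X, and f : X → ℝ satisfying (1−ε)·d(v,g) ≤ f(v) ≤ d(v,g) for all v ∈ X (multiplicatively ε-accurate and admissible). Let u, v, w ∈ X and c ∈ ℝ satisfy: (a) d(u,g) = d(u,w) + d(w,g); (b) c ≥ d(u,v); and (c) f(v) + c ≤ f(w) + d(u,w). Then c ≤ (d(u,g) − d(v,g)) + ε·d(v,g). -/
/-- Per-iteration bound for exploration under relative error (admissible/decremental case):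
`c ≤ Δ + ε · d(v, g)`. -/
theorem relative_error_step_admissible
    {X : Type*} [MetricSpace X] (ε : ℝ) (hε0 : 0 < ε) (hε1 : ε < 1)
    (g : X) (f : X → ℝ)
    (hf : ∀ v : X, (1 - ε) * dist v g ≤ f v ∧ f v ≤ dist v g)
    (u v w : X) (c : ℝ)
    (ha : dist u g = dist u w + dist w g)
    (hb : dist u v ≤ c)
    (hc : f v + c ≤ f w + dist u w) :
    c ≤ (dist u g - dist v g) + ε * dist v g := by
  obtain ⟨h1, _⟩ := hf v
  obtain ⟨_, h2⟩ := hf w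
  nlinarith [dist_nonneg (x := v) (y := g)]
end

section
/- Let (X,d) be a metric space, ε ∈ (0,1), r, g ∈ X, n ∈ ℕ, and f : X → ℝ satisfying (1−ε)·d(v,g) ≤ f(v) ≤ d(v,g) for all v ∈ X (multiplicatively ε-accurate and admissible). Let T ≤ n, let v_0, v_1, …, v_T ∈ X be pairwise distinct with v_0 = r and v_T = g, and let w_1, …, w_T ∈ X and step costs c_1, …, c_T ∈ ℝ satisfy, for every i ∈ {1,…,T}: (a) d(v_{i−1}, g) = d(v_{i−1}, w_i) + d(w_i, g); (b) c_i ≥ d(v_{i−1}, v_i); (c) f(v_i) + c_i ≤ f(w_i) + d(v_{i−1}, w_i); and (d) d(v_i, r) ≤ f(r)/(1−ε). Then Σ_{i=1}^T c_i ≤ (1 + 2nε/(1−ε))·d(r,g). -/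
/-!
Each greedy step costs at most the decrease of the true distance to the goal plus `ε` times
the distance of the new vertex to the goal: the geodesic point `w` makes `f w + d(v, w)` at most
`d(v, g)`, while `f` underestimates `d(v', g)` by at most a factor `1 - ε`. Inside the truncated
region every vertex lies within `2 · OPT / (1 - ε)` of the goal, so the costs telescope to
`OPT + T · ε · 2 · OPT / (1 - ε)`.
-/

open Finset

theorem Fin.sum_univ_castSucc_sub_succ {M : Type*} [AddCommGroup M] :
    ∀ {T : ℕ} (a : Fin (T + 1) → M), ∑ i : Fin T, (a i.castSucc - a i.succ) = a 0 - a (Fin.last T)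
  | 0, a => by simp
  | T + 1, a => by
    rw [Fin.sum_univ_castSucc]
    simp only [Fin.succ_castSucc]
    rw [Fin.sum_univ_castSucc_sub_succ fun i => a i.castSucc, Fin.castSucc_zero, Fin.succ_last]
    abel

theorem sum_le_sub_add_mul_of_le_sub_add {T : ℕ} {a : Fin (T + 1) → ℝ} {c : Fin T → ℝ} {δ : ℝ}
    (h : ∀ i, c i ≤ a i.castSucc - a i.succ + δ) :
    ∑ i, c i ≤ a 0 - a (Fin.last T) + T * δ :=
  calc ∑ i, c i ≤ ∑ i, (a i.castSucc - a i.succ + δ) := sum_le_sum fun i _ => h i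
    _ = a 0 - a (Fin.last T) + T * δ := by
      rw [sum_add_distrib, Fin.sum_univ_castSucc_sub_succ]
      simp

section Metric

variable {X : Type*} [PseudoMetricSpace X] {ε : ℝ} {f : X → ℝ} {g : X}

theorem greedy_step_le {x y w : X} {c : ℝ} (hy : (1 - ε) * dist y g ≤ f y)
    (hw : f w ≤ dist w g) (hgeod : dist x g = dist x w + dist w g)
    (hgreedy : f y + c ≤ f w + dist x w) :
    c ≤ dist x g - dist y g + ε * dist y g := by
  linarith

theorem dist_le_of_dist_le_div_one_sub {r y : X} (hε0 : 0 ≤ ε) (hε1 : ε < 1)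
    (hr : f r ≤ dist r g) (hy : dist y r ≤ f r / (1 - ε)) :
    dist y g ≤ 2 * dist r g / (1 - ε) := by
  have h1ε : 0 < 1 - ε := by linarith
  have hr' : dist r g ≤ dist r g / (1 - ε) :=
    le_div_self dist_nonneg h1ε (by linarith)
  calc dist y g ≤ dist y r + dist r g := dist_triangle _ _ _
    _ ≤ dist r g / (1 - ε) + dist r g := by gcongr; exact hy.trans (by gcongr)
    _ ≤ 2 * dist r g / (1 - ε) := by rw [two_mul, add_div]; linarith

end Metric

theorem relative_error_known_eps_admissible_general
    {X : Type*} [MetricSpace X] (ε : ℝ) (hε0 : 0 < ε) (hε1 : ε < 1)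
    (r g : X) (n : ℕ) (f : X → ℝ)
    (hf : ∀ v : X, (1 - ε) * dist v g ≤ f v ∧ f v ≤ dist v g)
    (T : ℕ) (hT : T ≤ n) (v : Fin (T + 1) → X)
    (hv0 : v 0 = r) (hvT : v (Fin.last T) = g)
    (w : Fin T → X) (c : Fin T → ℝ)
    (ha : ∀ i : Fin T, dist (v i.castSucc) g = dist (v i.castSucc) (w i) + dist (w i) g)
    (hc : ∀ i : Fin T, f (v i.succ) + c i ≤ f (w i) + dist (v i.castSucc) (w i))
    (hd : ∀ i : Fin T, dist (v i.succ) r ≤ f r / (1 - ε)) :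
    ∑ i, c i ≤ (1 + 2 * n * ε / (1 - ε)) * dist r g := by
  set B := 2 * dist r g / (1 - ε)
  have hB : 0 ≤ B := div_nonneg (by positivity) (by linarith)
  have hstep (i : Fin T) : c i ≤ dist (v i.castSucc) g - dist (v i.succ) g + ε * B := by
    have hnear := dist_le_of_dist_le_div_one_sub hε0.le hε1 (hf r).2 (hd i)
    have := greedy_step_le (hf _).1 (hf _).2 (ha i) (hc i)
    have := mul_le_mul_of_nonneg_left hnear hε0.le
    linarith
  calc ∑ i, c i ≤ dist (v 0) g - dist (v (Fin.last T)) g + T * (ε * B) :=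
        sum_le_sub_add_mul_of_le_sub_add (a := fun j => dist (v j) g) hstep
    _ = dist r g + T * (ε * B) := by simp [hv0, hvT]
    _ ≤ dist r g + n * (ε * B) := by gcongr
    _ = (1 + 2 * n * ε / (1 - ε)) * dist r g := by ring

/-- Trajectory form of Theorem 2 (exploration with known relative error, admissible case):
`ALG ≤ (1 + 2nε/(1-ε)) · OPT`. -/
theorem relative_error_known_eps_admissible
    {X : Type*} [MetricSpace X] (ε : ℝ) (hε0 : 0 < ε) (hε1 : ε < 1)
    (r g : X) (n : ℕ) (f : X → ℝ)
    (hf : ∀ v : X, (1 - ε) * dist v g ≤ f v ∧ f v ≤ dist v g)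
    (T : ℕ) (hT : T ≤ n) (v : Fin (T + 1) → X) (hv : Function.Injective v)
    (hv0 : v 0 = r) (hvT : v (Fin.last T) = g)
    (w : Fin T → X) (c : Fin T → ℝ)
    (ha : ∀ i : Fin T, dist (v i.castSucc) g = dist (v i.castSucc) (w i) + dist (w i) g)
    (hb : ∀ i : Fin T, dist (v i.castSucc) (v i.succ) ≤ c i)
    (hc : ∀ i : Fin T, f (v i.succ) + c i ≤ f (w i) + dist (v i.castSucc) (w i))
    (hd : ∀ i : Fin T, dist (v i.succ) r ≤ f r / (1 - ε)) :
    ∑ i, c i ≤ (1 + 2 * n * ε / (1 - ε)) * dist r g :=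
  relative_error_known_eps_admissible_general ε hε0 hε1 r g n f hf T hT v hv0 hvT w c ha hc hd
end

section
/- Let (X,d) be a metric space, ε ∈ (0,1), g, r ∈ X, and f : X → ℝ multiplicatively ε-accurate with respect to g, i.e. (1−ε)·d(v,g) ≤ f(v) ≤ (1+ε)·d(v,g) for all v ∈ X. Let β > 0 with β < 1 − ε, and let u, v, r' ∈ X satisfy d(r',g) ≤ d(r,g) and β·d(u,v) + f(v) ≤ β·d(u,r') + f(r'). Then d(v,g) ≤ ((1 + ε + β)/(1 − (ε + β)))·d(r,g). -/
/-- Lemma `beta-weighted-update-bounded-dist-to-g`: under the β-reweighted greedy rule,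
every visited vertex stays within distance `((1+ε+β)/(1-(ε+β))) · OPT` of the goal. -/
theorem beta_weighted_update_bounded_dist_to_goal
    {X : Type*} [MetricSpace X] (ε : ℝ) (hε0 : 0 < ε) (hε1 : ε < 1)
    (g r : X) (f : X → ℝ)
    (hf : ∀ v : X, (1 - ε) * dist v g ≤ f v ∧ f v ≤ (1 + ε) * dist v g)
    (β : ℝ) (hβ0 : 0 < β) (hβ : β < 1 - ε)
    (u v r' : X)
    (hr' : dist r' g ≤ dist r g)
    (hsel : β * dist u v + f v ≤ β * dist u r' + f r') :
    dist v g ≤ ((1 + ε + β) / (1 - (ε + β))) * dist r g := by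
  have h1 := (hf v).1
  have h2 := (hf r').2
  have htri : dist u r' ≤ dist u v + dist v r' := dist_triangle u v r'
  have htri2 : dist v r' ≤ dist v g + dist g r' := dist_triangle v g r'
  have hgr' : dist g r' = dist r' g := dist_comm g r'
  have hden : 0 < 1 - (ε + β) := by linarith
  rw [div_mul_eq_mul_div, le_div_iff₀ hden]
  nlinarith [dist_nonneg (x := r') (y := g), dist_nonneg (x := r) (y := g)]
end

section
/- Let (X,d) be a metric space, ε ∈ (0,1), g ∈ X, and f : X → ℝ multiplicatively ε-accurate with respect to g, i.e. (1−ε)·d(v,g) ≤ f(v) ≤ (1+ε)·d(v,g) for all v ∈ X. Let β satisfy (1+ε)/2 < β < 1 − ε, and let u, v, w ∈ X and c ∈ ℝ satisfy: (a) d(u,g) = d(u,w) + d(w,g); (b) c ≥ d(u,v); and (c) β·c + f(v) ≤ β·d(u,w) + f(w). Then (2β − 1 − ε)·c ≤ β·(d(u,g) − d(v,g)) + 2ε·d(v,g). -/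
/-- Lemma `beta-weighted-alg-guarantee`: per-iteration bound for the β-reweighted
greedy rule, `(2β - 1 - ε) · c ≤ β · Δ + 2ε · d(v, g)`. -/
theorem beta_weighted_step_bound
    {X : Type*} [MetricSpace X] (ε : ℝ) (hε0 : 0 < ε) (hε1 : ε < 1)
    (g : X) (f : X → ℝ)
    (hf : ∀ v : X, (1 - ε) * dist v g ≤ f v ∧ f v ≤ (1 + ε) * dist v g)
    (β : ℝ) (hβl : (1 + ε) / 2 < β) (hβu : β < 1 - ε)
    (u v w : X) (c : ℝ)
    (ha : dist u g = dist u w + dist w g)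
    (hb : dist u v ≤ c)
    (hc : β * c + f v ≤ β * dist u w + f w) :
    (2 * β - 1 - ε) * c ≤ β * (dist u g - dist v g) + 2 * ε * dist v g := by
  have h1 := (hf v).1
  have h2 := (hf w).2
  have htri : dist u g ≤ dist u v + dist v g := dist_triangle u v g
  have hpos : 0 < 1 + ε - β := by linarith
  have huw : 0 ≤ dist u w := dist_nonneg
  have key1 : 0 ≤ (1 + ε - β) * (c - dist u v) :=
    mul_nonneg (le_of_lt hpos) (by linarith)
  have key2 : 0 ≤ (1 + ε - β) * (dist u v - (dist u g - dist v g)) :=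
    mul_nonneg (le_of_lt hpos) (by linarith)
  have key3 : 0 ≤ (1 + ε - β) * dist u w := mul_nonneg (le_of_lt hpos) huw
  nlinarith [key1, key2, key3, h1, h2, hc, ha]
end

section
/- Let (X,d) be a metric space, ε ∈ (0,1/3), r, g ∈ X, n ∈ ℕ, and f : X → ℝ multiplicatively ε-accurate with respect to g, i.e. (1−ε)·d(v,g) ≤ f(v) ≤ (1+ε)·d(v,g) for all v ∈ X. Let T ≤ n, let v_0, v_1, …, v_T ∈ X be pairwise distinct with v_0 = r and v_T = g, and let w_1, …, w_T, r_1, …, r_T ∈ X and step costs c_1, …, c_T ∈ ℝ satisfy, for every i ∈ {1,…,T}: (a) d(v_{i−1}, g) = d(v_{i−1}, w_i) + d(w_i, g); (b) c_i ≥ d(v_{i−1}, v_i); (c) (2/3)·c_i + f(v_i) ≤ (2/3)·d(v_{i−1}, w_i) + f(w_i); (d) d(r_i, g) ≤ d(r,g); and (e) (2/3)·c_i + f(v_i) ≤ (2/3)·d(v_{i−1}, r_i) + f(r_i). Then Σ_{i=1}^T c_i ≤ (2 + 6ε/(1−3ε) + 6nε(5+3ε)/(1−3ε)²)·d(r,g).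 -/
/-!
Write `Dᵢ = d(vᵢ, g)`. Comparing the chosen vertex with the witness `wᵢ` on a geodesic towards
`g` gives `β cᵢ ≤ (1 + ε) Dᵢ₋₁ - (1 - ε) Dᵢ`, so the costs telescope to `(1 - ε) · OPT` plus an
error of `2ε ∑ Dᵢ₋₁`. Comparing it instead with the witness `rᵢ`, which is no farther from `g`
than the root, shows `(1 - ε - β) Dᵢ ≤ (1 + ε + β) · OPT`; for `β = 2/3` every `Dᵢ` is thus at most
`(5 + 3ε)/(1 - 3ε) · OPT`, and there are at most `n` error terms.
-/

open Finset

theorem Fin.sum_castSucc_sub_succ {M : Type*} [AddCommGroup M] {T : ℕ} (D : Fin (T + 1) → M) :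
    ∑ i : Fin T, (D i.castSucc - D i.succ) = D 0 - D (Fin.last T) := by
  rw [sum_sub_distrib, sub_eq_sub_iff_add_eq_add, ← Fin.sum_univ_castSucc, ← Fin.sum_univ_succ]

theorem sum_le_of_le_sub_succ_add {T : ℕ} {a b B : ℝ} {D : Fin (T + 1) → ℝ} {c : Fin T → ℝ}
    (ha : 0 ≤ a) (hb : 0 ≤ b)
    (hc : ∀ i, c i ≤ a * (D i.castSucc - D i.succ) + b * D i.castSucc)
    (hB : ∀ i : Fin T, D i.castSucc ≤ B) (hlast : 0 ≤ D (Fin.last T)) :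
    ∑ i, c i ≤ a * D 0 + T * b * B := by
  calc ∑ i, c i ≤ ∑ i, (a * (D i.castSucc - D i.succ) + b * D i.castSucc) :=
        sum_le_sum fun i _ => hc i
    _ = a * (D 0 - D (Fin.last T)) + b * ∑ i : Fin T, D i.castSucc := by
        rw [sum_add_distrib, ← mul_sum, ← mul_sum, Fin.sum_castSucc_sub_succ]
    _ ≤ a * D 0 + b * ∑ _i : Fin T, B := by
        have hsumB : ∑ i : Fin T, D i.castSucc ≤ ∑ _i : Fin T, B := sum_le_sum fun i _ => hB i
        linarith [mul_nonneg ha hlast, mul_le_mul_of_nonneg_left hsumB hb]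
    _ = a * D 0 + T * b * B := by
        rw [sum_const, card_univ, Fintype.card_fin, nsmul_eq_mul]; ring

section

variable {X : Type*} [MetricSpace X]

def IsRelErrorPrediction (ε : ℝ) (g : X) (f : X → ℝ) : Prop :=
  ∀ v, (1 - ε) * dist v g ≤ f v ∧ f v ≤ (1 + ε) * dist v g

namespace IsRelErrorPrediction

variable {ε β : ℝ} {g : X} {f : X → ℝ}

theorem mul_cost_le_of_mem_geodesic (hf : IsRelErrorPrediction ε g f) (hβ : β ≤ 1 + ε)
    {x y w : X} {c : ℝ} (hw : dist x g = dist x w + dist w g)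
    (hsel : β * c + f y ≤ β * dist x w + f w) :
    β * c ≤ (1 + ε) * dist x g - (1 - ε) * dist y g := by
  have hwg : dist w g ≤ dist x g := by linarith [dist_nonneg (x := x) (y := w)]
  rw [show dist x w = dist x g - dist w g by linarith] at hsel
  linarith [(hf y).1, (hf w).2, mul_le_mul_of_nonneg_left hwg (sub_nonneg.2 hβ)]

theorem mul_dist_le_of_selected (hf : IsRelErrorPrediction ε g f) (hβ : 0 ≤ β)
    {x y z : X} {c : ℝ} (hc : dist x y ≤ c) (hsel : β * c + f y ≤ β * dist x z + f z) :
    (1 - ε - β) * dist y g ≤ (1 + ε + β) * dist z g := by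
  have hxz : dist x z ≤ dist x g + dist z g := dist_triangle_right x z g
  have hxy : dist x g ≤ c + dist y g := by linarith [dist_triangle x y g]
  linarith [(hf y).1, (hf z).2, mul_le_mul_of_nonneg_left hxz hβ,
    mul_le_mul_of_nonneg_left hxy hβ]

theorem mul_sum_cost_le (hf : IsRelErrorPrediction ε g f) (hε : 0 ≤ ε) (hβ0 : 0 ≤ β)
    (hβ : β < 1 - ε) {r : X} {T : ℕ} {v : Fin (T + 1) → X} (hv0 : v 0 = r) {w rr : Fin T → X}
    {c : Fin T → ℝ}
    (ha : ∀ i, dist (v i.castSucc) g = dist (v i.castSucc) (w i) + dist (w i) g)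
    (hb : ∀ i, dist (v i.castSucc) (v i.succ) ≤ c i)
    (hc : ∀ i, β * c i + f (v i.succ) ≤ β * dist (v i.castSucc) (w i) + f (w i))
    (hd : ∀ i, dist (rr i) g ≤ dist r g)
    (he : ∀ i, β * c i + f (v i.succ) ≤ β * dist (v i.castSucc) (rr i) + f (rr i)) :
    β * ∑ i, c i ≤ (1 - ε + 2 * ε * T * ((1 + ε + β) / (1 - ε - β))) * dist r g := by
  set M := (1 + ε + β) / (1 - ε - β)
  have hM : 1 ≤ M := by rw [le_div_iff₀ (by linarith)]; linarith
  have hvM : ∀ k, dist (v k) g ≤ M * dist r g := by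
    intro k
    induction k using Fin.cases with
    | zero => rw [hv0]; exact le_mul_of_one_le_left dist_nonneg hM
    | succ j =>
      rw [div_mul_eq_mul_div, le_div_iff₀ (by linarith), mul_comm]
      exact (hf.mul_dist_le_of_selected hβ0 (hb j) (he j)).trans
        (mul_le_mul_of_nonneg_left (hd j) (by linarith))
  have hstep : ∀ i, β * c i ≤ (1 - ε) * (dist (v i.castSucc) g - dist (v i.succ) g)
      + 2 * ε * dist (v i.castSucc) g := fun i => by
    linarith [hf.mul_cost_le_of_mem_geodesic (by linarith) (ha i) (hc i)]
  calc β * ∑ i, c i = ∑ i, β * c i := mul_sum _ _ _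
    _ ≤ (1 - ε) * dist (v 0) g + T * (2 * ε) * (M * dist r g) :=
        sum_le_of_le_sub_succ_add (D := fun k => dist (v k) g) (by linarith) (by linarith) hstep
          (fun i => hvM _) dist_nonneg
    _ = (1 - ε + 2 * ε * T * M) * dist r g := by rw [hv0]; ring

end IsRelErrorPrediction

end

theorem relative_error_unknown_eps_general
    {X : Type*} [MetricSpace X] (ε : ℝ) (hε0 : 0 < ε) (hε1 : ε < 1 / 3)
    (r g : X) (n : ℕ) (f : X → ℝ)
    (hf : ∀ v : X, (1 - ε) * dist v g ≤ f v ∧ f v ≤ (1 + ε) * dist v g)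
    (T : ℕ) (hT : T ≤ n) (v : Fin (T + 1) → X)
    (hv0 : v 0 = r)
    (w rr : Fin T → X) (c : Fin T → ℝ)
    (ha : ∀ i : Fin T, dist (v i.castSucc) g = dist (v i.castSucc) (w i) + dist (w i) g)
    (hb : ∀ i : Fin T, dist (v i.castSucc) (v i.succ) ≤ c i)
    (hc : ∀ i : Fin T,
      (2 / 3 : ℝ) * c i + f (v i.succ) ≤ (2 / 3 : ℝ) * dist (v i.castSucc) (w i) + f (w i))
    (hd : ∀ i : Fin T, dist (rr i) g ≤ dist r g)
    (he : ∀ i : Fin T,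
      (2 / 3 : ℝ) * c i + f (v i.succ) ≤ (2 / 3 : ℝ) * dist (v i.castSucc) (rr i) + f (rr i)) :
    ∑ i, c i ≤
      (2 + 6 * ε / (1 - 3 * ε) + 6 * n * ε * (5 + 3 * ε) / (1 - 3 * ε) ^ 2) * dist r g := by
  have hsum := IsRelErrorPrediction.mul_sum_cost_le hf hε0.le (by norm_num) (by linarith)
    hv0 ha hb hc hd he
  have hu : 0 < 1 - 3 * ε := by linarith
  have hM : (1 + ε + 2 / 3) / (1 - ε - 2 / 3) = (5 + 3 * ε) / (1 - 3 * ε) := by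
    rw [div_eq_div_iff (by linarith) hu.ne']; ring
  have herror : 3 * ε * T * ((5 + 3 * ε) / (1 - 3 * ε)) ≤
      6 * n * ε * (5 + 3 * ε) / (1 - 3 * ε) ^ 2 := by
    have hu2 : (1 - 3 * ε) ^ 2 ≤ 1 - 3 * ε := by nlinarith
    have hTu : (T : ℝ) * (1 - 3 * ε) ^ 2 ≤ 2 * n * (1 - 3 * ε) := by
      nlinarith [mul_le_mul (Nat.cast_le.2 hT) hu2 (sq_nonneg _) (Nat.cast_nonneg n)]
    rw [mul_div_assoc', div_le_div_iff₀ hu (by positivity)]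
    nlinarith [mul_le_mul_of_nonneg_left hTu (by positivity : (0 : ℝ) ≤ 3 * ε * (5 + 3 * ε))]
  have hcoef : 3 / 2 * (1 - ε + 2 * ε * T * ((5 + 3 * ε) / (1 - 3 * ε))) ≤
      2 + 6 * ε / (1 - 3 * ε) + 6 * n * ε * (5 + 3 * ε) / (1 - 3 * ε) ^ 2 := by
    linarith [(by positivity : (0 : ℝ) ≤ 6 * ε / (1 - 3 * ε))]
  rw [hM] at hsum
  calc ∑ i, c i = 3 / 2 * (2 / 3 * ∑ i, c i) := by ring
    _ ≤ 3 / 2 * ((1 - ε + 2 * ε * T * ((5 + 3 * ε) / (1 - 3 * ε))) * dist r g) := by gcongr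
    _ ≤ _ := by rw [← mul_assoc]; exact mul_le_mul_of_nonneg_right hcoef dist_nonneg

/-- Trajectory form of Theorem 3 (exploration with unknown relative error `ε < 1/3`,
Algorithm 3 with `β = 2/3`): `ALG ≤ (2 + 6ε/(1-3ε) + 6nε(5+3ε)/(1-3ε)²) · OPT`. -/
theorem relative_error_unknown_eps
    {X : Type*} [MetricSpace X] (ε : ℝ) (hε0 : 0 < ε) (hε1 : ε < 1 / 3)
    (r g : X) (n : ℕ) (f : X → ℝ)
    (hf : ∀ v : X, (1 - ε) * dist v g ≤ f v ∧ f v ≤ (1 + ε) * dist v g)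
    (T : ℕ) (hT : T ≤ n) (v : Fin (T + 1) → X) (hv : Function.Injective v)
    (hv0 : v 0 = r) (hvT : v (Fin.last T) = g)
    (w rr : Fin T → X) (c : Fin T → ℝ)
    (ha : ∀ i : Fin T, dist (v i.castSucc) g = dist (v i.castSucc) (w i) + dist (w i) g)
    (hb : ∀ i : Fin T, dist (v i.castSucc) (v i.succ) ≤ c i)
    (hc : ∀ i : Fin T,
      (2 / 3 : ℝ) * c i + f (v i.succ) ≤ (2 / 3 : ℝ) * dist (v i.castSucc) (w i) + f (w i))
    (hd : ∀ i : Fin T, dist (rr i) g ≤ dist r g)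
    (he : ∀ i : Fin T,
      (2 / 3 : ℝ) * c i + f (v i.succ) ≤ (2 / 3 : ℝ) * dist (v i.castSucc) (rr i) + f (rr i)) :
    ∑ i, c i ≤
      (2 + 6 * ε / (1 - 3 * ε) + 6 * n * ε * (5 + 3 * ε) / (1 - 3 * ε) ^ 2) * dist r g :=
  relative_error_unknown_eps_general ε hε0 hε1 r g n f hf T hT v hv0 w rr c ha hb hc hd he
end

section
/- Let G be a connected simple graph on a finite vertex set V and let f : V → ℕ. For v ∈ V define φ₀(v) := |{u ∈ V : f(u) ≠ dist_G(u,v)}|, where dist_G denotes the shortest-path distance in G. Then for all u, v ∈ V: φ₀(u) + φ₀(v) ≥ dist_G(u,v). -/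
private lemma dist_getVert_le
    {V : Type*} (G : SimpleGraph V) (hG : G.Connected) :
    ∀ {u v : V} (p : G.Walk u v) (i : ℕ), G.dist u (p.getVert i) ≤ i := by
  intro u v p
  induction p with
  | nil =>
      intro i
      simp [SimpleGraph.Walk.getVert, SimpleGraph.dist_self]
  | @cons a b c h q ih =>
      intro i
      cases i with
      | zero =>
          simp [SimpleGraph.Walk.getVert, SimpleGraph.dist_self]
      | succ n =>
          rw [SimpleGraph.Walk.getVert_cons_succ]
          have h1 : G.dist a b ≤ 1 := by
            simpa using SimpleGraph.dist_le h.toWalk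
          have h2 := ih n
          have h3 : G.dist a (q.getVert n) ≤ G.dist a b + G.dist b (q.getVert n) :=
            hG.dist_triangle
          omega

private lemma getVert_dist_le
    {V : Type*} (G : SimpleGraph V) (hG : G.Connected)
    {u v : V} (p : G.Walk u v) (i : ℕ) (hi : i ≤ p.length) :
    G.dist (p.getVert i) v ≤ p.length - i := by
  have := dist_getVert_le G hG p.reverse (p.length - i)
  rw [SimpleGraph.Walk.getVert_reverse] at this
  have h2 : p.length - (p.length - i) = i := by omega
  rw [h2] at this
  rw [SimpleGraph.dist_comm]
  exact this

/-- For the implied ℓ0 error `φ₀(v) = |{u : f u ≠ dist_G(u,v)}|` on a connected graph,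
`φ₀(u) + φ₀(v) ≥ dist_G(u,v)`. -/
theorem phi0_sum_ge_dist
    {V : Type*} [Fintype V] [DecidableEq V]
    (G : SimpleGraph V) (hG : G.Connected) (f : V → ℕ) :
    ∀ u v : V,
      G.dist u v ≤
        (Finset.univ.filter (fun x => f x ≠ G.dist x u)).card +
          (Finset.univ.filter (fun x => f x ≠ G.dist x v)).card := by
  intro u v
  set d := G.dist u v with hd
  obtain ⟨p, hp⟩ := hG.exists_walk_length_eq_dist u v
  set F : ℕ → V := fun i => p.getVert i with hF
  have key : ∀ i ≤ d, G.dist u (F i) = i ∧ G.dist (F i) v = d - i := by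
    intro i hi
    have h1 : G.dist u (F i) ≤ i := dist_getVert_le G hG p i
    have h2 : G.dist (F i) v ≤ d - i := by
      have := getVert_dist_le G hG p i (by omega)
      rwa [hp] at this
    have h3 : d ≤ G.dist u (F i) + G.dist (F i) v := hG.dist_triangle
    omega
  set badU := Finset.univ.filter (fun x => f x ≠ G.dist x u) with hbU
  set badV := Finset.univ.filter (fun x => f x ≠ G.dist x v) with hbV
  set T : Finset ℕ := (Finset.range (d + 1)).filter (fun i => 2 * i ≠ d) with hT
  have hinj : Set.InjOn F T := by
    intro i hi j hj hij
    simp only [hT, Finset.coe_filter, Set.mem_setOf_eq, Finset.mem_range] at hi hj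
    have hki := (key i (by omega)).1
    have hkj := (key j (by omega)).1
    rw [hij] at hki
    omega
  have hsub : T.image F ⊆ badU ∪ badV := by
    intro x hx
    obtain ⟨i, hi, rfl⟩ := Finset.mem_image.mp hx
    simp only [hT, Finset.mem_filter, Finset.mem_range] at hi
    obtain ⟨hi1, hi2⟩ := hi
    obtain ⟨k1, k2⟩ := key i (by omega)
    rw [Finset.mem_union, hbU, hbV]
    simp only [Finset.mem_filter, Finset.mem_univ, true_and]
    rw [SimpleGraph.dist_comm] at k1
    rw [k1, k2]
    by_contra hcon
    push_neg at hcon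
    omega
  have hTcard : d ≤ T.card := by
    have hpart := Finset.card_filter_add_card_filter_not
      (s := Finset.range (d + 1)) (p := fun i => 2 * i ≠ d)
    have hle : ((Finset.range (d + 1)).filter (fun i => ¬ 2 * i ≠ d)).card ≤ 1 := by
      apply Finset.card_le_one.mpr
      intro a ha b hb
      simp only [Finset.mem_filter, not_not] at ha hb
      omega
    have hr : (Finset.range (d + 1)).card = d + 1 := Finset.card_range _
    rw [hT]
    omega
  calc d ≤ T.card := hTcard
    _ = (T.image F).card := (Finset.card_image_of_injOn hinj).symm
    _ ≤ (badU ∪ badV).card := Finset.card_le_card hsub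
    _ ≤ badU.card + badV.card := Finset.card_union_le _ _
end

section
/- Let V be a finite type equipped with a metric d, let f : V → ℝ, and for v ∈ V define φ₁(v) := Σ_{w ∈ V} |d(v,w) − f(w)|. Then for all u, v ∈ V: φ₁(u) + φ₁(v) ≥ 2·d(u,v) + Σ_{w ∈ V, w ≠ u, w ≠ v} |d(u,w) − d(v,w)|. -/
/-- For the implied ℓ1 error `φ₁(v) = Σ_w |d(v,w) − f(w)|` on a finite metric space,
`φ₁(u) + φ₁(v) ≥ 2·d(u,v) + Σ_{w ≠ u, v} |d(u,w) − d(v,w)|`. -/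
theorem phi1_sum_ge_dist
    {V : Type*} [Fintype V] [DecidableEq V] [MetricSpace V] (f : V → ℝ) :
    ∀ u v : V,
      2 * dist u v +
          ∑ w ∈ Finset.univ.filter (fun w => w ≠ u ∧ w ≠ v), |dist u w - dist v w| ≤
        (∑ w, |dist u w - f w|) + (∑ w, |dist v w - f w|) := by
  intro u v
  set g : V → ℝ := fun w => |dist u w - f w| + |dist v w - f w| with hg
  have h1 : ∑ w ∈ Finset.univ.filter (fun w => w ≠ u ∧ w ≠ v),
      |dist u w - dist v w| ≤ ∑ w ∈ Finset.univ.filter (fun w => w ≠ u ∧ w ≠ v), g w := by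
    refine Finset.sum_le_sum fun w _ => ?_
    calc |dist u w - dist v w| ≤ |dist u w - f w| + |f w - dist v w| := abs_sub_le _ _ _
      _ = g w := by rw [abs_sub_comm (f w)]
  have h2 : 2 * dist u v ≤
      ∑ w ∈ Finset.univ.filter (fun w => ¬(w ≠ u ∧ w ≠ v)), g w := by
    have hgnn : ∀ w, 0 ≤ g w := fun w => add_nonneg (abs_nonneg _) (abs_nonneg _)
    rcases eq_or_ne u v with rfl | huv
    · have : (0:ℝ) ≤ ∑ w ∈ Finset.univ.filter (fun w => ¬(w ≠ u ∧ w ≠ u)), g w :=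
        Finset.sum_nonneg fun w _ => hgnn w
      simpa using this
    · have hsub : ({u, v} : Finset V) ⊆
          Finset.univ.filter (fun w => ¬(w ≠ u ∧ w ≠ v)) := by
        intro w hw
        simp only [Finset.mem_insert, Finset.mem_singleton] at hw
        simp only [Finset.mem_filter, Finset.mem_univ, true_and]
        tauto
      have hle : ∑ w ∈ ({u, v} : Finset V), g w ≤
          ∑ w ∈ Finset.univ.filter (fun w => ¬(w ≠ u ∧ w ≠ v)), g w :=
        Finset.sum_le_sum_of_subset_of_nonneg hsub fun w _ _ => hgnn w
      have hpair : ∑ w ∈ ({u, v} : Finset V), g w = g u + g v :=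
        Finset.sum_pair huv
      have hu : dist u v ≤ g u := by
        have h := abs_sub_le (dist v u) (f u) 0
        simp only [hg, dist_self, zero_sub, abs_neg, sub_zero] at *
        rw [abs_dist] at h
        rw [dist_comm u v]
        linarith [h]
      have hv : dist u v ≤ g v := by
        have h := abs_sub_le (dist u v) (f v) 0
        simp only [hg, dist_self, zero_sub, abs_neg, sub_zero] at *
        rw [abs_dist] at h
        linarith [h]
      nlinarith [hle, hpair, hu, hv]
  calc 2 * dist u v + ∑ w ∈ Finset.univ.filter (fun w => w ≠ u ∧ w ≠ v),
        |dist u w - dist v w|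
      ≤ (∑ w ∈ Finset.univ.filter (fun w => ¬(w ≠ u ∧ w ≠ v)), g w) +
        ∑ w ∈ Finset.univ.filter (fun w => w ≠ u ∧ w ≠ v), g w := add_le_add h2 h1
    _ = ∑ w, g w := by
        rw [add_comm]
        exact Finset.sum_filter_add_sum_filter_not _ _ _
    _ = (∑ w, |dist u w - f w|) + (∑ w, |dist v w - f w|) := Finset.sum_add_distrib
end

section
/- Let V be a finite type, d : V × V → ℤ, f : V → ℝ, and let U, S be finite subsets of V. Define M(U) := {v ∈ V : d(v,u) = d(v,u') for all u, u' ∈ U}. Then |S \ M(U)| ≤ Σ_{u ∈ U} Σ_{w ∈ V} |f(w) − d(w,u)|, where d(w,u) is interpreted as a real number. -/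
/-- Lemma `integer_e1_cardinality_bound`: for an integer-valued distance function `d`,
the number of vertices of `S` not equidistant from all of `U` is bounded by the total
implied ℓ1 error over `U`. -/
theorem integer_e1_cardinality_bound
    {V : Type*} [Fintype V] [DecidableEq V]
    (d : V → V → ℤ) (f : V → ℝ) (U S : Finset V) :
    ((S.filter (fun v => ¬ ∀ u ∈ U, ∀ u' ∈ U, d v u = d v u')).card : ℝ) ≤
      ∑ u ∈ U, ∑ w, |f w - (d w u : ℝ)| := by
  classical
  set T := S.filter (fun v => ¬ ∀ u ∈ U, ∀ u' ∈ U, d v u = d v u') with hT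
  calc (T.card : ℝ) = ∑ w ∈ T, (1 : ℝ) := by simp
    _ ≤ ∑ w ∈ T, ∑ u ∈ U, |f w - (d w u : ℝ)| := by
        apply Finset.sum_le_sum
        intro w hw
        rw [hT, Finset.mem_filter] at hw
        obtain ⟨-, hw⟩ := hw
        push_neg at hw
        obtain ⟨u, hu, u', hu', hne⟩ := hw
        have hne' : u ≠ u' := fun h => hne (by rw [h])
        have h1 : (1 : ℝ) ≤ |(d w u : ℝ) - (d w u' : ℝ)| := by
          have : (1 : ℤ) ≤ |d w u - d w u'| := Int.one_le_abs (sub_ne_zero.mpr hne)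
          exact_mod_cast this
        have h2 : |(d w u : ℝ) - (d w u' : ℝ)| ≤ |f w - (d w u : ℝ)| + |f w - (d w u' : ℝ)| := by
          calc |(d w u : ℝ) - (d w u' : ℝ)|
              ≤ |(d w u : ℝ) - f w| + |f w - (d w u' : ℝ)| := abs_sub_le _ _ _
            _ = |f w - (d w u : ℝ)| + |f w - (d w u' : ℝ)| := by rw [abs_sub_comm]
        have hsub : ({u, u'} : Finset V) ⊆ U := by
          intro x hx
          rcases Finset.mem_insert.mp hx with h | h
          · exact h ▸ hu
          · exact (Finset.mem_singleton.mp h) ▸ hu'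
        have h3 : ∑ x ∈ ({u, u'} : Finset V), |f w - (d w x : ℝ)| ≤
            ∑ x ∈ U, |f w - (d w x : ℝ)| :=
          Finset.sum_le_sum_of_subset_of_nonneg hsub (fun _ _ _ => abs_nonneg _)
        rw [Finset.sum_pair hne'] at h3
        linarith
    _ = ∑ u ∈ U, ∑ w ∈ T, |f w - (d w u : ℝ)| := Finset.sum_comm
    _ ≤ ∑ u ∈ U, ∑ w, |f w - (d w u : ℝ)| := by
        apply Finset.sum_le_sum
        intro u _
        exact Finset.sum_le_sum_of_subset_of_nonneg (Finset.subset_univ T)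
          (fun _ _ _ => abs_nonneg _)
end

section
/- Let (X,d) be a finite metric space, τ : X → ℝ, and L₁, L₂ > 0 such that for all x, y ∈ X: d(x,y) ≤ L₁·|τ(x) − τ(y)| and |τ(x) − τ(y)| ≤ L₂·d(x,y). Then for every u ∈ X and every R > 0 there exists a set C ⊆ X with |C| ≤ ⌈8·L₁·L₂⌉ such that the closed ball {x : d(u,x) ≤ R} is contained in ⋃_{c ∈ C} {x : d(c,x) ≤ R/2}. In particular, the doubling constant of X is at most ⌈8ρ⌉ where ρ = L₁·L₂ is the distortion of τ. -/
/-!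
Cut the image of the ball `closedBall u R` under `τ`, an interval of length `2 L₂ R`, into
`4 L₁ L₂ + 1` buckets of length `R / (2 L₁)`, and keep one point from each nonempty bucket.
Two points in a common bucket are at distance less than `L₁ · R / (2 L₁) = R / 2`. Unless `X` is
a single point, `L₁ L₂ ≥ 1`, so `4 L₁ L₂ + 1 ≤ 8 L₁ L₂`.
-/

open Finset Metric

theorem abs_sub_lt_one_of_natFloor_eq_natFloor {a b : ℝ} (ha : 0 ≤ a) (hb : 0 ≤ b)
    (h : ⌊a⌋₊ = ⌊b⌋₊) : |a - b| < 1 := by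
  apply Int.abs_sub_lt_one_of_floor_eq_floor
  rw [← Int.natCast_floor_eq_floor ha, ← Int.natCast_floor_eq_floor hb, h]

theorem Finset.exists_card_le_forall_exists_map_eq {α β : Type*} [DecidableEq β]
    (S : Finset α) (T : Finset β) (f : α → β) (hf : ∀ x ∈ S, f x ∈ T) :
    ∃ C ⊆ S, #C ≤ #T ∧ ∀ x ∈ S, ∃ c ∈ C, f c = f x := by
  obtain ⟨C, hCS, hinj, himage⟩ :=
    exists_subset_injOn_image_eq_of_surjOn (f := f) (S : Set α) (S.image f)
      (by rw [coe_image]; exact Set.surjOn_image f S)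
  refine ⟨C, by exact_mod_cast hCS, ?_, fun x hx => ?_⟩
  · rw [← card_image_of_injOn hinj, himage]
    exact card_le_card (by simpa [subset_iff] using hf)
  · have : f x ∈ C.image f := himage ▸ mem_image_of_mem f hx
    simpa using this

theorem Finset.exists_card_le_forall_abs_sub_lt {α : Type*} (S : Finset α) (f : α → ℝ)
    {a D ℓ : ℝ} (hD : 0 ≤ D) (hℓ : 0 < ℓ) (hS : ∀ x ∈ S, f x ∈ Set.Icc a (a + D)) :
    ∃ C ⊆ S, (#C : ℝ) ≤ D / ℓ + 1 ∧ ∀ x ∈ S, ∃ c ∈ C, |f c - f x| < ℓ := by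
  set bucket : α → ℕ := fun x => ⌊(f x - a) / ℓ⌋₊
  have hbucket : ∀ x ∈ S, bucket x ∈ range (⌊D / ℓ⌋₊ + 1) := fun x hx => by
    have := hS x hx
    exact mem_range_succ_iff.2 <| Nat.floor_le_floor <| by gcongr; linarith [this.2]
  obtain ⟨C, hCS, hcard, hC⟩ := S.exists_card_le_forall_exists_map_eq _ bucket hbucket
  refine ⟨C, hCS, ?_, fun x hx => ?_⟩
  · calc (#C : ℝ) ≤ ⌊D / ℓ⌋₊ + 1 := by simpa using (Nat.cast_le (α := ℝ)).2 hcard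
      _ ≤ D / ℓ + 1 := by gcongr; exact Nat.floor_le (by positivity)
  · obtain ⟨c, hc, hcx⟩ := hC x hx
    have hnonneg : ∀ y ∈ S, 0 ≤ (f y - a) / ℓ := fun y hy =>
      div_nonneg (by linarith [(hS y hy).1]) hℓ.le
    have := abs_sub_lt_one_of_natFloor_eq_natFloor (hnonneg c (hCS hc)) (hnonneg x hx) hcx
    rw [← sub_div, sub_sub_sub_cancel_right, abs_div, abs_of_pos hℓ, div_lt_one hℓ] at this
    exact ⟨c, hc, this⟩

theorem one_le_mul_of_dist_le_of_abs_sub_le {X : Type*} [MetricSpace X] {τ : X → ℝ}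
    {L₁ L₂ : ℝ} (h1 : ∀ x y : X, dist x y ≤ L₁ * |τ x - τ y|)
    (h2 : ∀ x y : X, |τ x - τ y| ≤ L₂ * dist x y) {a b : X} (hab : a ≠ b) : 1 ≤ L₁ * L₂ := by
  have hd : 0 < dist a b := dist_pos.2 hab
  have hL₁ : 0 ≤ L₁ := by
    by_contra! hneg
    linarith [h1 a b, mul_nonpos_of_nonpos_of_nonneg hneg.le (abs_nonneg (τ a - τ b))]
  have : dist a b ≤ L₁ * L₂ * dist a b := by
    calc dist a b ≤ L₁ * |τ a - τ b| := h1 a b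
      _ ≤ L₁ * (L₂ * dist a b) := by gcongr; exact h2 a b
      _ = L₁ * L₂ * dist a b := by ring
  exact (le_mul_iff_one_le_left hd).1 this

/-- Lemma `path-embedding-vs-doubling-dim`: a finite metric space admitting an embedding
into the real line with distortion `ρ = L₁·L₂` has doubling constant at most `⌈8ρ⌉`:
every closed ball of radius `R` is covered by at most `⌈8·L₁·L₂⌉` closed balls of
radius `R/2`. -/
theorem path_embedding_doubling_constant
    {X : Type*} [MetricSpace X] [Fintype X]
    (τ : X → ℝ) (L₁ L₂ : ℝ) (hL₁ : 0 < L₁) (hL₂ : 0 < L₂)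
    (h1 : ∀ x y : X, dist x y ≤ L₁ * |τ x - τ y|)
    (h2 : ∀ x y : X, |τ x - τ y| ≤ L₂ * dist x y) :
    ∀ (u : X) (R : ℝ), 0 < R →
      ∃ C : Finset X, C.card ≤ ⌈8 * L₁ * L₂⌉₊ ∧
        Metric.closedBall u R ⊆ ⋃ c ∈ C, Metric.closedBall c (R / 2) := by
  intro u R hR
  classical
  rcases subsingleton_or_nontrivial X with hX | hX
  · refine ⟨{u}, by simp [Nat.one_le_iff_ne_zero]; positivity, fun x _ => ?_⟩
    simp only [Subsingleton.elim x u, mem_singleton, Set.iUnion_iUnion_eq_left]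
    exact mem_closedBall_self (by positivity)
  obtain ⟨a, b, hab⟩ := exists_pair_ne X
  have hρ : 1 ≤ L₁ * L₂ := one_le_mul_of_dist_le_of_abs_sub_le h1 h2 hab
  have hτ : ∀ x ∈ (closedBall u R).toFinset,
      τ x ∈ Set.Icc (τ u - L₂ * R) (τ u - L₂ * R + 2 * L₂ * R) := by
    intro x hx
    have := (h2 x u).trans (mul_le_mul_of_nonneg_left (by simpa using hx) hL₂.le)
    constructor <;> linarith [abs_le.1 this]
  obtain ⟨C, -, hcard, hcover⟩ := (closedBall u R).toFinset.exists_card_le_forall_abs_sub_lt τ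
    (by positivity) (by positivity : 0 < R / (2 * L₁)) hτ
  refine ⟨C, ?_, fun x hx => ?_⟩
  · have : 2 * L₂ * R / (R / (2 * L₁)) + 1 ≤ 8 * L₁ * L₂ := by
      rw [div_div_eq_mul_div]; field_simp; nlinarith
    exact_mod_cast (hcard.trans this).trans (Nat.le_ceil _)
  · obtain ⟨c, hc, hcx⟩ := hcover x (by simpa using hx)
    refine Set.mem_biUnion hc (mem_closedBall'.2 ?_)
    calc dist c x ≤ L₁ * |τ c - τ x| := h1 c x
      _ ≤ L₁ * (R / (2 * L₁)) := by gcongr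
      _ = R / 2 := by field_simp
end

section
/- Let G be a connected simple graph on a finite vertex set V, f : V → ℕ, and for v ∈ V define φ₀(v) := |{u ∈ V : f(u) ≠ dist_G(u,v)}|, where dist_G is the shortest-path distance. Let λ ∈ ℕ and L := {v ∈ V : φ₀(v) ≤ λ}, and suppose L is nonempty. Suppose there exist τ : V → ℝ and constants c > 0, ρ ≥ 1 such that c·dist_G(x,y) ≤ |τ(x) − τ(y)| ≤ c·ρ·dist_G(x,y) for all x, y ∈ V. Then for every v ∈ L there is an enumeration s_1, …, s_k of L with s_1 = v and Σ_{i=1}^{k−1} dist_G(s_i, s_{i+1}) ≤ 4·ρ·λ; that is, tour_G(L) ≤ 4ρλ. -/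
/-!
Two points `u, v` of the sublevel set are at graph distance at most `2λ`: on a geodesic from `u`
to `v` every vertex but the midpoint has different distances to `u` and to `v`, so its label is
wrong for one of them, and there are at most `φ₀(u) + φ₀(v) ≤ 2λ` such vertices. Hence the
embedding `τ` maps the sublevel set into an interval of length `D ≤ cρ·2λ`. Starting at `v`,
sweep down along `τ` to the lowest point and then up to the highest: each sweep is monotone,
so the tour has `τ`-length at most `2D`, and the lower distortion bound divides this by `c`.
-/

/-- The length, in graph distance, of a walk visiting the points of a list in order. -/
noncomputable def graphPathLen {V : Type*} (G : SimpleGraph V) (l : List V) : ℕ :=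
  (l.zipWith G.dist l.tail).sum

open Finset

namespace SimpleGraph

variable {V : Type*} {G : SimpleGraph V} {u v : V}

lemma Walk.dist_getVert_of_length_eq_dist (p : G.Walk u v) (hp : p.length = G.dist u v)
    {k : ℕ} (hk : k ≤ p.length) :
    G.dist u (p.getVert k) = k ∧ G.dist (p.getVert k) v = p.length - k := by
  have h₁ : G.dist u (p.getVert k) ≤ k := by simpa [hk] using dist_le (p.take k)
  have h₂ : G.dist (p.getVert k) v ≤ p.length - k := by simpa using dist_le (p.drop k)
  have h₃ := (p.take k).reachable.dist_triangle_left v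
  omega

variable [Fintype V]

/-- The implied `ℓ₀` error `φ₀(v)` of the labelling `f`. -/
noncomputable def impliedL0Error (G : SimpleGraph V) (f : V → ℕ) (v : V) : ℕ :=
  #{u | f u ≠ G.dist u v}

theorem Reachable.dist_le_impliedL0Error_add [DecidableEq V] (h : G.Reachable u v) (f : V → ℕ) :
    G.dist u v ≤ G.impliedL0Error f u + G.impliedL0Error f v := by
  obtain ⟨p, hp⟩ := h.exists_walk_length_eq_dist
  set d := G.dist u v
  set K := (range (d + 1)).erase (d / 2)
  have hdist : ∀ k ∈ K, G.dist u (p.getVert k) = k ∧ G.dist (p.getVert k) v = d - k := by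
    intro k hk
    have hkd : k ≤ p.length := by
      simp only [K, mem_erase, mem_range] at hk
      omega
    simpa [hp] using p.dist_getVert_of_length_eq_dist hp hkd
  have hmaps : ∀ k ∈ K, p.getVert k ∈
      univ.filter (fun w => f w ≠ G.dist w u) ∪ univ.filter (fun w => f w ≠ G.dist w v) := by
    intro k hk
    obtain ⟨hu, hv⟩ := hdist k hk
    have hmid : k ≠ d / 2 := (mem_erase.1 hk).1
    simp only [mem_union, mem_filter, mem_univ, true_and]
    rw [dist_comm, hu, hv]
    omega
  have hinj : Set.InjOn p.getVert K := fun k hk k' hk' hkk' => by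
    rw [← (hdist k hk).1, ← (hdist k' hk').1, hkk']
  calc d = #K := by
        rw [card_erase_of_mem (mem_range.2 (by omega)), card_range, Nat.add_sub_cancel]
    _ ≤ _ := card_le_card_of_injOn _ hmaps hinj
    _ ≤ _ := card_union_le _ _

end SimpleGraph

section PathLength

variable {α : Type*}

def pathLength (d : α → α → ℝ) (l : List α) : ℝ :=
  (l.zipWith d l.tail).sum

@[simp]
lemma pathLength_nil (d : α → α → ℝ) : pathLength d [] = 0 := rfl

@[simp]
lemma pathLength_singleton (d : α → α → ℝ) (a : α) : pathLength d [a] = 0 := rfl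

@[simp]
lemma pathLength_cons_cons (d : α → α → ℝ) (a b : α) (l : List α) :
    pathLength d (a :: b :: l) = d a b + pathLength d (b :: l) := by
  simp [pathLength]

lemma pathLength_append (d : α → α → ℝ) {l₁ : List α} (h : l₁ ≠ []) (l₂ : List α) :
    pathLength d (l₁ ++ l₂) = pathLength d l₁ + pathLength d (l₁.getLast h :: l₂) := by
  induction l₁ with
  | nil => contradiction
  | cons a t ih =>
    cases t with
    | nil => simp
    | cons b t =>
      simp only [List.cons_append, pathLength_cons_cons] at ih ⊢
      rw [ih (List.cons_ne_nil b t), List.getLast_cons_cons]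
      ring

lemma pathLength_abs_sub_of_pairwise (τ : α → ℝ) {a : α} {l : List α}
    (h : (a :: l).Pairwise (fun x y => τ x ≤ τ y)) :
    pathLength (fun x y => |τ x - τ y|) (a :: l) =
      τ ((a :: l).getLast (List.cons_ne_nil a l)) - τ a := by
  induction l generalizing a with
  | nil => simp
  | cons b t ih =>
    have hab : τ a ≤ τ b := List.rel_of_pairwise_cons h List.mem_cons_self
    rw [pathLength_cons_cons, ih h.of_cons, List.getLast_cons_cons, abs_of_nonpos (by linarith)]
    ring

lemma mul_graphPathLen_le_pathLength {G : SimpleGraph α} {c : ℝ} {d : α → α → ℝ}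
    (h : ∀ x y, c * G.dist x y ≤ d x y) (l : List α) :
    c * graphPathLen G l ≤ pathLength d l := by
  induction l with
  | nil => simp [graphPathLen]
  | cons a t ih =>
    cases t with
    | nil => simp [graphPathLen]
    | cons b t =>
      have hcons : graphPathLen G (a :: b :: t) = G.dist a b + graphPathLen G (b :: t) := by
        simp [graphPathLen]
      rw [hcons, pathLength_cons_cons]
      push_cast
      linarith [h a b]

end PathLength

section LineTour

variable {α : Type*} [DecidableEq α]

theorem exists_tour_pathLength_abs_sub_le (τ : α → ℝ) {S : Finset α} {v : α} (hv : v ∈ S)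
    {D : ℝ} (hD : ∀ x ∈ S, ∀ y ∈ S, |τ x - τ y| ≤ D) :
    ∃ l : List α, l.Nodup ∧ l.toFinset = S ∧ l.head? = some v ∧
      pathLength (fun x y => |τ x - τ y|) l ≤ 2 * D := by
  set sorted := S.toList.mergeSort (fun x y => decide (τ x ≤ τ y))
  have hperm : sorted.Perm S.toList := List.mergeSort_perm _ _
  have hsorted : sorted.Pairwise (fun x y => τ x ≤ τ y) := by
    simpa using List.pairwise_mergeSort (le := fun x y => decide (τ x ≤ τ y))
      (by simpa using fun _ _ _ => le_trans) (by simpa using fun _ _ => le_total _ _) S.toList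
  have hmem : ∀ {x}, x ∈ sorted → x ∈ S := by simp [sorted]
  obtain ⟨A, B, hAB⟩ := List.append_of_mem (hperm.mem_iff.2 (Finset.mem_toList.2 hv))
  have hAB' : sorted = (A ++ [v]) ++ B := by simp [hAB]
  have htour : ((v :: A.reverse) ++ B).Perm S.toList :=
    ((((List.reverse_perm A).append_right B).cons v).trans List.perm_middle.symm).trans
      (hAB ▸ hperm)
  refine ⟨(v :: A.reverse) ++ B, htour.nodup_iff.2 S.nodup_toList,
    by rw [List.toFinset_eq_of_perm _ _ htour, Finset.toList_toFinset], rfl, ?_⟩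
  set m := (v :: A.reverse).getLast (List.cons_ne_nil _ _)
  have hm : m ∈ A ++ [v] := by
    have h : m ∈ v :: A.reverse := List.getLast_mem _
    rw [← List.mem_reverse]
    simpa using h
  -- the descending sweep is an ascending one for `-τ`
  have hdown : pathLength (fun x y => |τ x - τ y|) (v :: A.reverse) = τ v - τ m := by
    have hpw : (v :: A.reverse).Pairwise (fun x y => (-τ) x ≤ (-τ) y) := by
      rw [← List.reverse_concat', List.pairwise_reverse]
      simpa using hsorted.sublist (hAB' ▸ List.sublist_append_left (A ++ [v]) B)
    have := pathLength_abs_sub_of_pairwise (-τ) hpw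
    simp only [Pi.neg_apply, neg_sub_neg, abs_sub_comm] at this
    linarith
  have hsub : (m :: B).Sublist sorted :=
    hAB' ▸ (List.singleton_sublist.2 hm).append (List.Sublist.refl B)
  set e := (m :: B).getLast (List.cons_ne_nil _ _)
  have hup : pathLength (fun x y => |τ x - τ y|) (m :: B) = τ e - τ m :=
    pathLength_abs_sub_of_pairwise τ (hsorted.sublist hsub)
  have hmS : m ∈ S := hmem (hsub.subset List.mem_cons_self)
  have heS : e ∈ S := hmem (hsub.subset (List.getLast_mem _))
  rw [pathLength_append _ (List.cons_ne_nil _ _), hdown, hup]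
  linarith [le_abs_self (τ v - τ m), le_abs_self (τ e - τ m), hD v hv m hmS, hD e heS m hmS]

end LineTour

theorem phi0_sublevel_tour_bound_general
    {V : Type*} [Fintype V] [DecidableEq V]
    (G : SimpleGraph V) (hG : G.Connected) (f : V → ℕ)
    (lam : ℕ)
    (L : Finset V)
    (hL : L = Finset.univ.filter
      (fun v => (Finset.univ.filter (fun u => f u ≠ G.dist u v)).card ≤ lam))
    (τ : V → ℝ) (c ρ : ℝ) (hc : 0 < c) (hρ : 1 ≤ ρ)
    (hemb : ∀ x y : V,
      c * (G.dist x y : ℝ) ≤ |τ x - τ y| ∧ |τ x - τ y| ≤ c * ρ * (G.dist x y : ℝ)) :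
    ∀ v ∈ L, ∃ l : List V, l.Nodup ∧ l.toFinset = L ∧ l.head? = some v ∧
      (graphPathLen G l : ℝ) ≤ 4 * ρ * (lam : ℝ) := by
  have herror : ∀ x ∈ L, G.impliedL0Error f x ≤ lam := fun x hx => by
    rw [hL, Finset.mem_filter] at hx
    exact hx.2
  have hdiam : ∀ x ∈ L, ∀ y ∈ L, |τ x - τ y| ≤ c * ρ * (2 * lam) := fun x hx y hy => by
    have hxy : G.dist x y ≤ 2 * lam :=
      ((hG.preconnected x y).dist_le_impliedL0Error_add f).trans
        (by linarith [herror x hx, herror y hy])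
    calc |τ x - τ y| ≤ c * ρ * G.dist x y := (hemb x y).2
      _ ≤ c * ρ * (2 * lam) :=
        mul_le_mul_of_nonneg_left (by exact_mod_cast hxy) (mul_nonneg hc.le (by linarith))
  intro v hv
  obtain ⟨l, hnodup, hl, hhead, hlen⟩ := exists_tour_pathLength_abs_sub_le τ hv hdiam
  refine ⟨l, hnodup, hl, hhead, le_of_mul_le_mul_left ?_ hc⟩
  calc c * (graphPathLen G l : ℝ) ≤ pathLength (fun x y => |τ x - τ y|) l :=
        mul_graphPathLen_le_pathLength (fun x y => (hemb x y).1) l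
    _ ≤ 2 * (c * ρ * (2 * lam)) := hlen
    _ = c * (4 * ρ * lam) := by ring

/-- Core estimate behind the `φ₀` planning bound: if the connected unweighted graph `G`
embeds into the real line with distortion `ρ`, then the sublevel set
`L = {v : φ₀(v) ≤ λ}` admits, from every starting point of `L`, an enumeration of total
graph-distance length at most `4ρλ`; that is, `tour_G(L) ≤ 4ρλ`. -/
theorem phi0_sublevel_tour_bound
    {V : Type*} [Fintype V] [DecidableEq V]
    (G : SimpleGraph V) (hG : G.Connected) (f : V → ℕ)
    (lam : ℕ)
    (L : Finset V)
    (hL : L = Finset.univ.filter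
      (fun v => (Finset.univ.filter (fun u => f u ≠ G.dist u v)).card ≤ lam))
    (hLne : L.Nonempty)
    (τ : V → ℝ) (c ρ : ℝ) (hc : 0 < c) (hρ : 1 ≤ ρ)
    (hemb : ∀ x y : V,
      c * (G.dist x y : ℝ) ≤ |τ x - τ y| ∧ |τ x - τ y| ≤ c * ρ * (G.dist x y : ℝ)) :
    ∀ v ∈ L, ∃ l : List V, l.Nodup ∧ l.toFinset = L ∧ l.head? = some v ∧
      (graphPathLen G l : ℝ) ≤ 4 * ρ * (lam : ℝ) :=
  phi0_sublevel_tour_bound_general G hG f lam L hL τ c ρ hc hρ hemb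
end

section
/- Let (X,d) be a metric space, m ≥ 1 a natural number, w > 0, r ∈ X, and x_1, …, x_m ∈ X pairwise distinct points with d(r, x_i) = w for all i and d(x_i, x_j) = 2w for all i ≠ j. Then for every N ∈ ℕ and every sequence p_0, p_1, …, p_N ∈ X with p_0 = r such that every x_i appears among p_0, …, p_N, we have Σ_{j=0}^{N−1} d(p_j, p_{j+1}) ≥ (2m − 1)·w. -/
/-- Chain lower bound: the total length of a path dominates the sum of distances
between points at a monotone sequence of times starting at 0 and ending by `N`. -/
lemma chain_sum_dist_le {X : Type*} [MetricSpace X] (q : ℕ → X) (N : ℕ) (g : ℕ → ℕ)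
    (k : ℕ) (hmono : ∀ i < k, g i ≤ g (i + 1)) (hN : g k ≤ N) (h0 : g 0 = 0) :
    ∑ i ∈ Finset.range k, dist (q (g i)) (q (g (i + 1))) ≤
      ∑ j ∈ Finset.range N, dist (q j) (q (j + 1)) := by
  have step1 : ∑ i ∈ Finset.range k, dist (q (g i)) (q (g (i + 1))) ≤
      ∑ i ∈ Finset.range k, ∑ j ∈ Finset.Ico (g i) (g (i + 1)), dist (q j) (q (j + 1)) := by
    apply Finset.sum_le_sum
    intro i hi
    exact dist_le_Ico_sum_dist _ (hmono i (Finset.mem_range.mp hi))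
  have step2 : ∀ k', (∀ i < k', g i ≤ g (i + 1)) →
      ∑ i ∈ Finset.range k', ∑ j ∈ Finset.Ico (g i) (g (i + 1)), dist (q j) (q (j + 1)) =
        ∑ j ∈ Finset.Ico (g 0) (g k'), dist (q j) (q (j + 1)) := by
    intro k'
    induction k' with
    | zero => simp
    | succ n ih =>
      intro h
      have h0n : g 0 ≤ g n := by
        clear ih
        induction n with
        | zero => exact le_refl _
        | succ n2 ih2 =>
          exact le_trans (ih2 (fun i hi => h i (by omega))) (h n2 (by omega))
      rw [Finset.sum_range_succ, ih (fun i hi => h i (Nat.lt_succ_of_lt hi))]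
      exact Finset.sum_Ico_consecutive _ h0n (h n (Nat.lt_succ_self _))
  have step3 : ∑ j ∈ Finset.Ico (g 0) (g k), dist (q j) (q (j + 1)) ≤
      ∑ j ∈ Finset.range N, dist (q j) (q (j + 1)) := by
    apply Finset.sum_le_sum_of_subset_of_nonneg
    · intro j hj
      rw [Finset.mem_Ico] at hj
      exact Finset.mem_range.mpr (lt_of_lt_of_le hj.2 hN)
    · intro _ _ _; exact dist_nonneg
  calc _ ≤ _ := step1
    _ = _ := step2 k hmono
    _ ≤ _ := step3

/-- Star lower bound: any trajectory starting at the center `r` of a metric star with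
`m` leaves at distance `w` (pairwise distance `2w`) that visits every leaf has total
length at least `(2m − 1)·w`. -/
theorem star_traversal_lower_bound
    {X : Type*} [MetricSpace X] (m : ℕ) (hm : 1 ≤ m) (w : ℝ) (hw : 0 < w)
    (r : X) (x : Fin m → X) (hx : Function.Injective x)
    (hrx : ∀ i : Fin m, dist r (x i) = w)
    (hxx : ∀ i j : Fin m, i ≠ j → dist (x i) (x j) = 2 * w) :
    ∀ (N : ℕ) (p : ℕ → X), p 0 = r → (∀ i : Fin m, ∃ j ≤ N, p j = x i) →
      (2 * (m : ℝ) - 1) * w ≤ ∑ j ∈ Finset.range N, dist (p j) (p (j + 1)) := by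
  intro N p hp0 hvisit
  choose t htN htp using hvisit
  have htinj : Function.Injective t := fun a b hab => hx (by rw [← htp a, ← htp b, hab])
  set T : Finset ℕ := Finset.image t Finset.univ with hT
  have hcard : T.card = m := by
    rw [hT, Finset.card_image_of_injective _ htinj, Finset.card_univ, Fintype.card_fin]
  set s : Fin m ↪o ℕ := T.orderEmbOfFin hcard with hs
  have hsT : ∀ i, s i ∈ T := fun i => Finset.orderEmbOfFin_mem T hcard i
  -- every element of T equals some t j, so p at it is some leaf, and it is ≤ N
  have hTprop : ∀ a ∈ T, ∃ j : Fin m, t j = a := by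
    intro a ha
    rw [hT, Finset.mem_image] at ha
    obtain ⟨j, _, hj⟩ := ha
    exact ⟨j, hj⟩
  have hTle : ∀ a ∈ T, a ≤ N := by
    intro a ha
    obtain ⟨j, hj⟩ := hTprop a ha
    exact hj ▸ htN j
  -- define the time sequence g
  set g : ℕ → ℕ := fun k => if hk : k = 0 then 0 else
    if h2 : k - 1 < m then s ⟨k - 1, h2⟩ else N with hg
  have hg0 : g 0 = 0 := by simp [hg]
  have hgs : ∀ (i : ℕ) (h : i < m), g (i + 1) = s ⟨i, h⟩ := by
    intro i h
    simp [hg, h]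
  have hmono : ∀ i < m, g i ≤ g (i + 1) := by
    intro i hi
    rcases Nat.eq_zero_or_pos i with h | h
    · subst h; rw [hg0]; exact Nat.zero_le _
    · obtain ⟨i', rfl⟩ := Nat.exists_eq_succ_of_ne_zero (Nat.pos_iff_ne_zero.mp h)
      have hi' : i' < m := lt_trans (Nat.lt_succ_self _) hi
      rw [hgs i' hi', hgs (i' + 1) hi]
      exact le_of_lt (s.strictMono (by simp [Fin.lt_def]))
  have hgN : g m ≤ N := by
    have hm' : m - 1 < m := Nat.sub_lt (lt_of_lt_of_le one_pos hm) one_pos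
    obtain ⟨m', rfl⟩ := Nat.exists_eq_succ_of_ne_zero (Nat.pos_iff_ne_zero.mp (lt_of_lt_of_le one_pos hm))
    rw [hgs m' (Nat.lt_succ_self _)]
    exact hTle _ (hsT _)
  have key := chain_sum_dist_le p N g m hmono hgN hg0
  refine le_trans ?_ key
  -- now compute the lower bound for the chain sum
  -- leaf at each s i
  have hleaf : ∀ i : Fin m, ∃ j : Fin m, p (s i) = x j ∧ t j = s i := by
    intro i
    obtain ⟨j, hj⟩ := hTprop (s i) (hsT i)
    exact ⟨j, by rw [← hj, htp], hj⟩
  obtain ⟨m', rfl⟩ := Nat.exists_eq_succ_of_ne_zero (Nat.pos_iff_ne_zero.mp (lt_of_lt_of_le one_pos hm))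
  rw [Finset.sum_range_succ']
  have hfirst : dist (p (g 0)) (p (g 1)) = w := by
    rw [hg0, hp0, hgs 0 (Nat.succ_pos _)]
    obtain ⟨j, hj, _⟩ := hleaf ⟨0, Nat.succ_pos _⟩
    rw [hj, hrx]
  have hrest : ∀ i ∈ Finset.range m', dist (p (g (i + 1))) (p (g (i + 1 + 1))) = 2 * w := by
    intro i hi
    rw [Finset.mem_range] at hi
    have h1 : i < m' + 1 := Nat.lt_succ_of_lt hi
    have h2 : i + 1 < m' + 1 := Nat.succ_lt_succ hi
    rw [hgs i h1, hgs (i + 1) h2]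
    obtain ⟨a, ha, hta⟩ := hleaf ⟨i, h1⟩
    obtain ⟨b, hb, htb⟩ := hleaf ⟨i + 1, h2⟩
    rw [ha, hb]
    apply hxx
    intro hab
    have : s ⟨i, h1⟩ = s ⟨i + 1, h2⟩ := by rw [← hta, ← htb, hab]
    have := s.injective this
    simp [Fin.ext_iff] at this
  rw [Finset.sum_congr rfl hrest, hfirst, Finset.sum_const, Finset.card_range]
  push_cast
  ring_nf
  nlinarith [hw]
end

section
/- Let (X,d) be a metric space, m ≥ 4 a natural number, w₁, w₂ > 0, r, g ∈ X, and x_1, …, x_m ∈ X pairwise distinct points, all distinct from g, with d(r, x_i) = w₁ for all i, d(x_i, x_j) = 2w₁ for all i ≠ j, and d(r,g) = w₁ + w₂. Set ε := w₁/(w₁ + w₂) and n := m + 2. Then for every N ≥ 1 and every sequence p_0, p_1, …, p_N ∈ X with p_0 = r and p_N = g such that every x_i appears among p_0, …, p_N, we have Σ_{j=0}^{N−1} d(p_j, p_{j+1}) ≥ (1 + n·ε)·d(r,g). -/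
private lemma seg_le {X : Type*} [MetricSpace X] (p : ℕ → X) :
    ∀ a b : ℕ, a ≤ b →
      dist (p a) (p b) ≤ ∑ j ∈ Finset.Ico a b, dist (p j) (p (j + 1)) := by
  intro a b hab
  induction b, hab using Nat.le_induction with
  | base => simp
  | succ b hab ih =>
      rw [Finset.sum_Ico_succ_top hab]
      calc dist (p a) (p (b+1)) ≤ dist (p a) (p b) + dist (p b) (p (b+1)) :=
            dist_triangle _ _ _
        _ ≤ _ := by linarith

private lemma chain_le {X : Type*} [MetricSpace X] (p : ℕ → X) (u : ℕ → ℕ)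
    (hmono : ∀ k, u k ≤ u (k + 1)) :
    ∀ K : ℕ, ∑ k ∈ Finset.range K, dist (p (u k)) (p (u (k + 1))) ≤
      ∑ j ∈ Finset.Ico (u 0) (u K), dist (p j) (p (j + 1)) := by
  have hu : Monotone u := monotone_nat_of_le_succ hmono
  intro K
  induction K with
  | zero => simp
  | succ K ih =>
      rw [Finset.sum_range_succ,
        ← Finset.sum_Ico_consecutive _ (hu (Nat.zero_le K)) (hmono K)]
      exact add_le_add ih (seg_le p _ _ (hmono K))

/-- Relative-error exploration lower bound (core of Theorem
`multiplicative_error_explo_LB`): in a weighted metric star with `m` leaves at distance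
`w₁` from the center `r` and goal at distance `w₁ + w₂`, any trajectory starting at `r`,
ending at `g`, and visiting all leaves has length at least `(1 + n·ε)·d(r,g)`, where
`ε = w₁/(w₁+w₂)` and `n = m + 2`. -/
theorem relative_error_exploration_lower_bound
    {X : Type*} [MetricSpace X] (m : ℕ) (hm : 4 ≤ m) (w₁ w₂ : ℝ)
    (hw₁ : 0 < w₁) (hw₂ : 0 < w₂)
    (r g : X) (x : Fin m → X) (hx : Function.Injective x)
    (hxg : ∀ i : Fin m, x i ≠ g)
    (hrx : ∀ i : Fin m, dist r (x i) = w₁)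
    (hxx : ∀ i j : Fin m, i ≠ j → dist (x i) (x j) = 2 * w₁)
    (hrg : dist r g = w₁ + w₂) :
    ∀ (N : ℕ), 1 ≤ N → ∀ p : ℕ → X, p 0 = r → p N = g →
      (∀ i : Fin m, ∃ j ≤ N, p j = x i) →
      (1 + ((m : ℝ) + 2) * (w₁ / (w₁ + w₂))) * dist r g ≤
        ∑ j ∈ Finset.range N, dist (p j) (p (j + 1)) := by
  intro N hN p hp0 hpN hvisit
  -- choose visit times
  choose t htN htp using hvisit
  have ht_inj : Function.Injective t := by
    intro i j hij
    exact hx (by rw [← htp i, ← htp j, hij])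
  have ht_pos : ∀ i, 0 < t i := by
    intro i
    rcases Nat.eq_zero_or_pos (t i) with h | h
    · exfalso
      have hre : r = x i := by rw [← hp0, ← htp i, h]
      have h1 := hrx i
      rw [← hre, dist_self] at h1
      linarith
    · exact h
  have ht_lt : ∀ i, t i < N := by
    intro i
    rcases lt_or_eq_of_le (htN i) with h | h
    · exact h
    · exact absurd (by rw [← htp i, h, hpN]) (hxg i)
  -- sorted enumeration of visit times
  set s : Finset ℕ := Finset.image t Finset.univ with hs
  have hcard : s.card = m := by
    rw [hs, Finset.card_image_of_injective _ ht_inj, Finset.card_univ, Fintype.card_fin]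
  set e := s.orderIsoOfFin hcard with he
  have hmem : ∀ k : Fin m, ∃ i : Fin m, t i = (e k : ℕ) := by
    intro k
    have h2 := (e k).2
    obtain ⟨i, -, hi⟩ := Finset.mem_image.mp h2
    exact ⟨i, hi⟩
  -- the sequence of times
  set u : ℕ → ℕ := fun k =>
    if hk : 1 ≤ k ∧ k ≤ m then (e ⟨k - 1, by omega⟩ : ℕ) else if k = 0 then 0 else N
    with hu
  have hu0 : u 0 = 0 := by simp [hu]
  have huN : u (m + 1) = N := by
    have : ¬ (1 ≤ m + 1 ∧ m + 1 ≤ m) := by omega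
    simp [hu, this]
  have hubig : ∀ k, m + 1 ≤ k → u k = N := by
    intro k hk
    have h1 : ¬ (1 ≤ k ∧ k ≤ m) := by omega
    have h2 : k ≠ 0 := by omega
    simp [hu, h1, h2]
  have hueq : ∀ k (h1 : 1 ≤ k) (h2 : k ≤ m), u k = (e ⟨k - 1, by omega⟩ : ℕ) := by
    intro k h1 h2
    simp [hu, h1, h2]
  have humid : ∀ k (h1 : 1 ≤ k) (h2 : k ≤ m), ∃ i : Fin m, t i = u k := by
    intro k h1 h2
    obtain ⟨i, hi⟩ := hmem ⟨k - 1, by omega⟩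
    exact ⟨i, by rw [hueq k h1 h2, hi]⟩
  -- monotonicity
  have hmono : ∀ k, u k ≤ u (k + 1) := by
    intro k
    rcases Nat.lt_or_ge k (m + 1) with hk | hk
    · rcases Nat.eq_zero_or_pos k with h0 | h0
      · subst h0
        rw [hu0]
        exact Nat.zero_le _
      · rcases Nat.lt_or_ge k m with hkm | hkm
        · -- 1 ≤ k < m : both interior
          rw [hueq k h0 (le_of_lt hkm), hueq (k + 1) (by omega) (by omega)]
          have : (⟨k - 1, by omega⟩ : Fin m) < ⟨k + 1 - 1, by omega⟩ := by
            simp [Fin.lt_def]; omega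
          exact le_of_lt (e.strictMono this)
        · -- k = m
          have hkm' : k = m := by omega
          subst hkm'
          obtain ⟨i, hti⟩ := humid k h0 le_rfl
          rw [hubig (k + 1) (by omega), ← hti]
          exact htN i
    · rw [hubig k hk, hubig (k + 1) (by omega)]
  -- main chain bound
  have hchain := chain_le p u hmono (m + 1)
  rw [hu0, huN, ← Finset.range_eq_Ico] at hchain
  -- lower bound the chain terms
  have hsplit : ∑ k ∈ Finset.range (m + 1), dist (p (u k)) (p (u (k + 1))) =
      dist (p (u 0)) (p (u 1)) +
        ∑ k ∈ Finset.Ico 1 m, dist (p (u k)) (p (u (k + 1))) +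
        dist (p (u m)) (p (u (m + 1))) := by
    rw [Finset.sum_range_succ, Finset.range_eq_Ico,
      Finset.sum_eq_sum_Ico_succ_bot (by omega : 0 < m)]
  have hterm0 : dist (p (u 0)) (p (u 1)) = w₁ := by
    obtain ⟨i, hti⟩ := humid 1 le_rfl (by omega)
    rw [hu0, hp0, ← hti, htp i]
    exact hrx i
  have htermmid : ∀ k ∈ Finset.Ico 1 m, dist (p (u k)) (p (u (k + 1))) = 2 * w₁ := by
    intro k hk
    rw [Finset.mem_Ico] at hk
    obtain ⟨i, hti⟩ := humid k hk.1 (le_of_lt hk.2)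
    obtain ⟨j, htj⟩ := humid (k + 1) (by omega) (by omega)
    have hij : i ≠ j := by
      intro h
      subst h
      have : u k = u (k + 1) := by rw [← hti, ← htj]
      rw [hueq k hk.1 (le_of_lt hk.2), hueq (k + 1) (by omega) (by omega)] at this
      have := e.injective (Subtype.coe_injective this)
      simp [Fin.ext_iff] at this
      omega
    rw [← hti, ← htj, htp i, htp j]
    exact hxx i j hij
  have htermlast : w₂ ≤ dist (p (u m)) (p (u (m + 1))) := by
    obtain ⟨i, hti⟩ := humid m (by omega) le_rfl
    rw [huN, hpN, ← hti, htp i]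
    have := dist_triangle r (x i) g
    rw [hrg, hrx i] at this
    linarith
  have hmidsum : ∑ k ∈ Finset.Ico 1 m, dist (p (u k)) (p (u (k + 1))) =
      ((m : ℝ) - 1) * (2 * w₁) := by
    rw [Finset.sum_congr rfl htermmid, Finset.sum_const, Nat.card_Ico, nsmul_eq_mul]
    push_cast [Nat.cast_sub (by omega : 1 ≤ m)]
    ring
  -- combine
  have hbound : w₁ + ((m : ℝ) - 1) * (2 * w₁) + w₂ ≤
      ∑ j ∈ Finset.range N, dist (p j) (p (j + 1)) := by
    rw [hsplit, hterm0, hmidsum] at hchain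
    linarith
  rw [hrg]
  have hmR : (4 : ℝ) ≤ (m : ℝ) := by exact_mod_cast hm
  have hpos : (0 : ℝ) < w₁ + w₂ := by linarith
  have : (1 + ((m : ℝ) + 2) * (w₁ / (w₁ + w₂))) * (w₁ + w₂) =
      (w₁ + w₂) + ((m : ℝ) + 2) * w₁ := by
    field_simp
  rw [this]
  nlinarith [hbound]
end
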